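/- arXiv:math/0702391 — 2 statements merged into one kernel-verified Lean document; each statement's English description precedes it below -/
import Mathlib

section
/- Generalized Kac formula: Let μ be a measure preserved by a measurable bijection θ and B ∈ 𝒜. Then ∫_B T_B dμ = μ({T̃_B < ∞}) and ∫_B T̃_B dμ = μ({T_B < ∞}), where the integrals are taken in [0,∞]. -/
open MeasureTheory
open scoped ENNReal Classical
noncomputable section

/-- First hitting time `inf {n ≥ 1 : θ^n ω ∈ B}` valued in `ℕ∞` (`⊤` if never). -/
def hitT {Ω : Type*} (θ : Ω → Ω) (B : Set Ω) (ω : Ω) : ℕ∞ :=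
  ⨅ (n : ℕ) (_ : 0 < n ∧ θ^[n] ω ∈ B), (n : ℕ∞)

/-- Number of visits to `A` strictly before the hitting time of `B` (in `[0,∞]`). -/
def countM {Ω : Type*} (θ : Ω → Ω) (B A : Set Ω) (ω : Ω) : ℝ≥0∞ :=
  ∑' n : ℕ, if (n : ℕ∞) < hitT θ B ω ∧ θ^[n] ω ∈ A then 1 else 0

/-!
Write `T = hitT θ B` and `T̃ = hitT θ⁻¹ B`. By the layer-cake formula
`∫_B T dμ = ∑ₙ μ(B ∩ {n < T})`, and `ω ↦ θⁿ ω` maps `B ∩ {n < T}` bijectively onto the set of points whose backward orbit first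
meets `B` at time `n`, time `0` included. These sets partition `B ∪ {T̃ < ∞}`, so by invariance the
integral equals `μ(B ∪ {T̃ < ∞})`. The points of `B` with `T̃ = ∞` form a wandering set for `θ⁻¹`
whose images all lie in `{T̃ < ∞}`: either they are null or `μ{T̃ < ∞} = ∞`, and in both cases
`μ(B ∪ {T̃ < ∞}) = μ{T̃ < ∞}`. The second formula is the first one for `θ⁻¹`.
-/

open Set Function

theorem ENat.toENNReal_eq_tsum_ite (a : ℕ∞) :
    (a : ℝ≥0∞) = ∑' n : ℕ, if (n : ℕ∞) < a then 1 else 0 := by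
  induction a using ENat.recTopCoe with
  | top => simp
  | coe m =>
    rw [tsum_eq_sum (s := Finset.range m) (by simp)]
    simp [Finset.filter_true_of_mem]

theorem lintegral_enat_eq_tsum_measure_lt {α : Type*} [MeasurableSpace α] (μ : Measure α)
    {f : α → ℕ∞} (hf : ∀ n : ℕ, MeasurableSet {x | (n : ℕ∞) < f x}) :
    ∫⁻ x, (f x : ℝ≥0∞) ∂μ = ∑' n : ℕ, μ {x | (n : ℕ∞) < f x} := by
  calc ∫⁻ x, (f x : ℝ≥0∞) ∂μ = ∫⁻ x, ∑' n : ℕ, {x | (n : ℕ∞) < f x}.indicator 1 x ∂μ := by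
        congr with x
        simp only [ENat.toENNReal_eq_tsum_ite (f x), indicator_apply, mem_ofPred_eq, Pi.one_apply]
    _ = ∑' n : ℕ, μ {x | (n : ℕ∞) < f x} := by
        rw [lintegral_tsum fun n => (measurable_one.indicator (hf n)).aemeasurable]
        simp_rw [lintegral_indicator_one (hf _)]

theorem Function.LeftInverse.iterate_apply_iterate_of_le {α : Type*} {f g : α → α}
    (hgf : LeftInverse g f) {k n : ℕ} (hkn : k ≤ n) (x : α) :
    g^[k] (f^[n] x) = f^[n - k] x := by
  rw [← Nat.add_sub_of_le hkn, iterate_add_apply, (hgf.iterate k).eq, Nat.add_sub_cancel_left]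

section HittingTime

variable {Ω : Type*} {f : Ω → Ω} {B : Set Ω} {ω : Ω}

theorem natCast_lt_hitT_iff {n : ℕ} :
    (n : ℕ∞) < hitT f B ω ↔ ∀ k, 0 < k → k ≤ n → f^[k] ω ∉ B := by
  refine ⟨fun h k hk hkn hkB => ?_, fun h => ?_⟩
  · have : hitT f B ω ≤ k := iInf₂_le k ⟨hk, hkB⟩
    exact absurd (h.trans_le this) (by exact_mod_cast hkn.not_gt)
  · refine (ENat.add_one_le_iff (ENat.natCast_ne_top n)).1 (le_iInf₂ fun k hk => ?_)
    have : n < k := lt_of_not_ge fun hkn => h k hk.1 hkn hk.2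
    exact_mod_cast this

theorem hitT_lt_top_iff : hitT f B ω < ⊤ ↔ ∃ n, f^[n + 1] ω ∈ B := by
  simp only [hitT, iInf_lt_iff, ENat.natCast_lt_top, exists_prop, and_true]
  exact ⟨fun ⟨n, hn, hnB⟩ => ⟨n - 1, by rwa [Nat.sub_add_cancel hn]⟩,
    fun ⟨n, hnB⟩ => ⟨n + 1, n.succ_pos, hnB⟩⟩

theorem pairwise_disjoint_preimage_iterate_diff_setOf_hitT_lt_top :
    Pairwise (Disjoint on fun k : ℕ => f^[k + 1] ⁻¹' (B \ {ω | hitT f B ω < ⊤})) := by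
  refine (pairwise_disjoint_on _).2 fun i j hij => disjoint_left.2 fun ω hi hj => hi.2 ?_
  refine hitT_lt_top_iff.2 ⟨j - i - 1, ?_⟩
  rw [← iterate_add_apply, show j - i - 1 + 1 + (i + 1) = j + 1 by omega]
  exact hj.1

variable [MeasurableSpace Ω]

theorem measurableSet_natCast_lt_hitT (hf : Measurable f) (hB : MeasurableSet B) (n : ℕ) :
    MeasurableSet {ω | (n : ℕ∞) < hitT f B ω} := by
  simp only [natCast_lt_hitT_iff, ofPred_forall]
  exact .iInter fun k => .iInter fun _ => .iInter fun _ => ((hf.iterate k) hB).compl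

theorem measurableSet_hitT_lt_top (hf : Measurable f) (hB : MeasurableSet B) :
    MeasurableSet {ω | hitT f B ω < ⊤} := by
  simp only [hitT_lt_top_iff, ofPred_exists]
  exact .iUnion fun n => (hf.iterate _) hB

end HittingTime

def firstEntrance {Ω : Type*} (f : Ω → Ω) (B : Set Ω) (n : ℕ) : Set Ω :=
  {ω | f^[n] ω ∈ B ∧ ∀ k < n, f^[k] ω ∉ B}

section FirstEntrance

variable {Ω : Type*} {f g : Ω → Ω} {B : Set Ω}

theorem pairwise_disjoint_firstEntrance : Pairwise (Disjoint on firstEntrance f B) :=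
  (pairwise_disjoint_on _).2 fun _ _ hij =>
    disjoint_left.2 fun _ hi hj => hj.2 _ hij hi.1

theorem iUnion_firstEntrance : ⋃ n, firstEntrance f B n = {ω | ∃ n, f^[n] ω ∈ B} := by
  ext ω
  simp only [mem_iUnion, mem_ofPred_eq]
  exact ⟨fun ⟨n, hn⟩ => ⟨n, hn.1⟩, fun h => ⟨Nat.find h, Nat.find_spec h, fun _ => Nat.find_min h⟩⟩

theorem union_setOf_hitT_lt_top : B ∪ {ω | hitT f B ω < ⊤} = {ω | ∃ n, f^[n] ω ∈ B} := by
  ext ω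
  simp only [mem_union, mem_ofPred_eq, hitT_lt_top_iff]
  refine ⟨?_, fun ⟨n, hn⟩ => ?_⟩
  · rintro (hB | ⟨n, hn⟩)
    exacts [⟨0, hB⟩, ⟨n + 1, hn⟩]
  · cases n with
    | zero => exact .inl hn
    | succ n => exact .inr ⟨n, hn⟩

theorem preimage_iterate_firstEntrance (hgf : LeftInverse g f) (n : ℕ) :
    f^[n] ⁻¹' firstEntrance g B n = B ∩ {ω | (n : ℕ∞) < hitT f B ω} := by
  ext ω
  simp only [firstEntrance, mem_preimage, mem_inter_iff, mem_ofPred_eq, natCast_lt_hitT_iff,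
    hgf.iterate_apply_iterate_of_le le_rfl, Nat.sub_self, iterate_zero_apply]
  refine and_congr_right fun _ => ⟨fun h j hj hjn => ?_, fun h k hkn => ?_⟩
  · simpa [hgf.iterate_apply_iterate_of_le, Nat.sub_sub_self hjn] using h (n - j) (by omega)
  · rw [hgf.iterate_apply_iterate_of_le hkn.le]
    exact h _ (by omega) (n.sub_le k)

variable [MeasurableSpace Ω]

theorem measurableSet_firstEntrance (hf : Measurable f) (hB : MeasurableSet B) (n : ℕ) :
    MeasurableSet (firstEntrance f B n) := by
  simp only [firstEntrance, ofPred_and, ofPred_forall]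
  exact ((hf.iterate n) hB).inter <| .iInter fun k => .iInter fun _ => ((hf.iterate k) hB).compl

end FirstEntrance

section Kac

variable {Ω : Type*} [MeasurableSpace Ω] {μ : Measure Ω} {f g : Ω → Ω} {B : Set Ω}

theorem measure_union_setOf_hitT_lt_top (hg : MeasurePreserving g μ μ) (hB : MeasurableSet B) :
    μ (B ∪ {ω | hitT g B ω < ⊤}) = μ {ω | hitT g B ω < ⊤} := by
  set F := {ω | hitT g B ω < ⊤}
  have hF : MeasurableSet F := measurableSet_hitT_lt_top hg.measurable hB
  have hW : MeasurableSet (B \ F) := hB.diff hF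
  have h_wandering : ∑' _ : ℕ, μ (B \ F) ≤ μ F :=
    calc ∑' _ : ℕ, μ (B \ F) = ∑' k : ℕ, μ (g^[k + 1] ⁻¹' (B \ F)) := by
          simp_rw [(hg.iterate _).measure_preimage hW.nullMeasurableSet]
      _ = μ (⋃ k : ℕ, g^[k + 1] ⁻¹' (B \ F)) :=
          (measure_iUnion pairwise_disjoint_preimage_iterate_diff_setOf_hitT_lt_top
            fun k => (hg.measurable.iterate _) hW).symm
      _ ≤ μ F := measure_mono <| iUnion_subset fun k _ hω => hitT_lt_top_iff.2 ⟨k, hω.1⟩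
  rw [union_comm, ← union_sdiff_self, measure_union disjoint_sdiff_right hW]
  rcases eq_or_ne (μ (B \ F)) 0 with h0 | h0
  · rw [h0, add_zero]
  · have hF_top : μ F = ⊤ :=
      top_unique <| (ENNReal.tsum_const_eq_top_of_ne_zero (α := ℕ) h0).symm.trans_le h_wandering
    rw [hF_top, top_add]

theorem lintegral_hitT_eq_measure_hitT_lt_top (hf : MeasurePreserving f μ μ)
    (hg : MeasurePreserving g μ μ) (hgf : LeftInverse g f) (hB : MeasurableSet B) :
    ∫⁻ ω in B, (hitT f B ω : ℝ≥0∞) ∂μ = μ {ω | hitT g B ω < ⊤} :=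
  calc ∫⁻ ω in B, (hitT f B ω : ℝ≥0∞) ∂μ = ∑' n : ℕ, μ (B ∩ {ω | (n : ℕ∞) < hitT f B ω}) := by
        rw [lintegral_enat_eq_tsum_measure_lt _ (measurableSet_natCast_lt_hitT hf.measurable hB)]
        simp_rw [Measure.restrict_apply (measurableSet_natCast_lt_hitT hf.measurable hB _),
          inter_comm]
    _ = ∑' n : ℕ, μ (firstEntrance g B n) := by
        congr with n
        rw [← preimage_iterate_firstEntrance hgf, (hf.iterate n).measure_preimage
          (measurableSet_firstEntrance hg.measurable hB n).nullMeasurableSet]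
    _ = μ {ω | hitT g B ω < ⊤} := by
        rw [← measure_iUnion pairwise_disjoint_firstEntrance
          (measurableSet_firstEntrance hg.measurable hB), iUnion_firstEntrance,
          ← union_setOf_hitT_lt_top, measure_union_setOf_hitT_lt_top hg hB]

end Kac

/-- Generalized Kac formula: `∫_B T_B dμ = μ(T̃_B < ∞)` and `∫_B T̃_B dμ = μ(T_B < ∞)`. -/
theorem generalized_kac {Ω : Type*} [MeasurableSpace Ω]
    (θ : Ω ≃ Ω) (hθ : Measurable θ) (hθ' : Measurable θ.symm)
    (μ : Measure Ω) (hinv : ∀ A : Set Ω, MeasurableSet A → μ (⇑θ ⁻¹' A) = μ A)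
    (B : Set Ω) (hB : MeasurableSet B) :
    (∫⁻ ω in B, (hitT (⇑θ) B ω : ℝ≥0∞) ∂μ = μ {ω | hitT (⇑θ.symm) B ω < ⊤}) ∧
    (∫⁻ ω in B, (hitT (⇑θ.symm) B ω : ℝ≥0∞) ∂μ = μ {ω | hitT (⇑θ) B ω < ⊤}) := by
  let e : Ω ≃ᵐ Ω := ⟨θ, hθ, hθ'⟩
  have he : MeasurePreserving e μ μ :=
    ⟨hθ, Measure.ext fun A hA => by rw [Measure.map_apply e.measurable hA]; exact hinv A hA⟩
  have he_symm : MeasurePreserving e.symm μ μ := he.symm e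
  exact ⟨lintegral_hitT_eq_measure_hitT_lt_top he he_symm θ.left_inv hB,
    lintegral_hitT_eq_measure_hitT_lt_top he_symm he θ.right_inv hB⟩
end
end

section
/- Uniqueness of the invariant distribution for countable Markov chains: Let P = (p_{ij}) be an irreducible, positive recurrent stochastic matrix on a countable state space S. Then there is at most one probability measure π on S with πP = π; moreover π equals the cycle measure π^{(b)}(a) = E_b[Σ_{n=0}^{𝔱_b−1} 1(X_n = a)]/E_b[𝔱_b] for any fixed state b, where 𝔱_b is the first return time to b. -/
open scoped ENNReal Classical
noncomputable section

/-- `n`-step transition probabilities of the stochastic matrix `p`. -/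
def pPow {S : Type*} (p : S → S → ℝ≥0∞) : ℕ → S → S → ℝ≥0∞
  | 0, i, j => if i = j then 1 else 0
  | n + 1, i, j => ∑' k, pPow p n i k * p k j

/-- `i` and `j` communicate. -/
def Communicates {S : Type*} (p : S → S → ℝ≥0∞) (i j : S) : Prop :=
  (∃ n, 0 < pPow p n i j) ∧ (∃ n, 0 < pPow p n j i)

/-- `taboo p b n j = P_b(X_n = j, X_1 ≠ b, …, X_n ≠ b) = P_b(X_n = j, 𝔱_b > n)`. -/
def taboo {S : Type*} (p : S → S → ℝ≥0∞) (b : S) : ℕ → S → ℝ≥0∞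
  | 0, j => if j = b then 1 else 0
  | n + 1, j => if j = b then 0 else ∑' i, taboo p b n i * p i j

/-- `E_b[Σ_{n=0}^{𝔱_b−1} 1(X_n = a)]`. -/
def cycNum {S : Type*} (p : S → S → ℝ≥0∞) (b a : S) : ℝ≥0∞ := ∑' n, taboo p b n a

/-- `E_b[𝔱_b] = Σ_n P_b(𝔱_b > n)`. -/
def meanRet {S : Type*} (p : S → S → ℝ≥0∞) (b : S) : ℝ≥0∞ := ∑' n, ∑' j, taboo p b n j

/-- The cycle (occupation) measure `π^{(b)}`. -/
def cyc {S : Type*} (p : S → S → ℝ≥0∞) (b a : S) : ℝ≥0∞ := cycNum p b a / meanRet p b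

/-!
Fix a state `b`. Positive recurrence makes `P_b(𝔱_b > n)` summable, so the chain started at
`b` returns to `b` almost surely, and this makes the cycle occupation measure `cycNum p b`
invariant. Unrolling `π = πP` along excursions away from `b` shows that every invariant `π`
dominates `π b • cycNum p b`. The two invariant measures agree at `b`, and a strict excess of
`π` at a state `c` would propagate to `b` because `c` leads to `b`; so `π = π b • cycNum p b`.
Summing over all states gives `π b · E_b 𝔱_b = 1`.
-/
section Invariant

variable {S : Type*} (p : S → S → ℝ≥0∞)

def IsStationaryMeasure (μ : S → ℝ≥0∞) : Prop := ∀ j, μ j = ∑' i, μ i * p i j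

lemma tsum_pPow_eq_one (hstoch : ∀ i, ∑' j, p i j = 1) (n : ℕ) (i : S) :
    ∑' j, pPow p n i j = 1 := by
  induction n generalizing i with
  | zero => simp [pPow]
  | succ n ih =>
    calc ∑' j, pPow p (n + 1) i j = ∑' k, pPow p n i k * ∑' j, p k j := by
          simp only [pPow]
          rw [ENNReal.tsum_comm]
          simp_rw [ENNReal.tsum_mul_left]
      _ = 1 := by simp [hstoch, ih]

lemma pPow_ne_top (hstoch : ∀ i, ∑' j, p i j = 1) (n : ℕ) (i j : S) : pPow p n i j ≠ ⊤ :=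
  ENNReal.ne_top_of_tsum_ne_top (by simp [tsum_pPow_eq_one p hstoch]) j

variable {p}

lemma IsStationaryMeasure.tsum_mul_pPow {μ : S → ℝ≥0∞} (hμ : IsStationaryMeasure p μ)
    (n : ℕ) (j : S) :
    ∑' i, μ i * pPow p n i j = μ j := by
  induction n generalizing j with
  | zero => simp [pPow]
  | succ n ih =>
    calc ∑' i, μ i * pPow p (n + 1) i j = ∑' k, (∑' i, μ i * pPow p n i k) * p k j := by
          simp only [pPow]
          simp_rw [← ENNReal.tsum_mul_left, ← ENNReal.tsum_mul_right, mul_assoc]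
          exact ENNReal.tsum_comm
      _ = μ j := by simp_rw [ih]; exact (hμ j).symm

lemma IsStationaryMeasure.const_mul {μ : S → ℝ≥0∞} (hμ : IsStationaryMeasure p μ) (c : ℝ≥0∞) :
    IsStationaryMeasure p (fun i => c * μ i) := fun j => by
  show c * μ j = _
  rw [hμ j, ← ENNReal.tsum_mul_left]
  simp_rw [mul_assoc]

lemma IsStationaryMeasure.eq_of_le (hstoch : ∀ i, ∑' j, p i j = 1) {μ ν : S → ℝ≥0∞}
    (hμ : IsStationaryMeasure p μ) (hν : IsStationaryMeasure p ν) (hle : ∀ i, μ i ≤ ν i)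
    {b c : S} (hb : μ b ≠ ⊤) (heq : μ b = ν b) (hreach : ∃ n, 0 < pPow p n c b) : μ c = ν c := by
  obtain ⟨n, hn⟩ := hreach
  refine le_antisymm (hle c) (not_lt.1 fun hlt => ?_)
  have hstrict : ∑' i, μ i * pPow p n i b < ∑' i, ν i * pPow p n i b :=
    ENNReal.tsum_lt_tsum (by rwa [hμ.tsum_mul_pPow]) (fun i => mul_le_mul_left (hle i) _)
      (ENNReal.mul_lt_mul_left hn.ne' (pPow_ne_top p hstoch n c b) hlt)
  rw [hμ.tsum_mul_pPow, hν.tsum_mul_pPow, heq] at hstrict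
  exact hstrict.false

end Invariant

section Taboo

variable {S : Type*} (p : S → S → ℝ≥0∞) (b : S)

/-- `firstReturn p b n = P_b(𝔱_b = n + 1)`. -/
def firstReturn (n : ℕ) : ℝ≥0∞ := ∑' i, taboo p b n i * p i b

lemma taboo_succ_of_ne {a : S} (ha : a ≠ b) (n : ℕ) :
    taboo p b (n + 1) a = ∑' i, taboo p b n i * p i a := by simp [taboo, ha]

lemma cycNum_self : cycNum p b b = 1 := by
  rw [cycNum, tsum_eq_zero_add' ENNReal.summable]
  simp [taboo]

lemma cycNum_of_ne {a : S} (ha : a ≠ b) :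
    cycNum p b a = ∑' n, ∑' i, taboo p b n i * p i a := by
  rw [cycNum, tsum_eq_zero_add' ENNReal.summable]
  simp [taboo, ha]

lemma meanRet_eq_tsum_cycNum : meanRet p b = ∑' a, cycNum p b a := ENNReal.tsum_comm

/-- `P_b(𝔱_b > n + 1) + P_b(𝔱_b = n + 1) = P_b(𝔱_b > n)`. -/
lemma tsum_taboo_succ_add_firstReturn (hstoch : ∀ i, ∑' j, p i j = 1) (n : ℕ) :
    ∑' j, taboo p b (n + 1) j + firstReturn p b n = ∑' j, taboo p b n j :=
  calc ∑' j, taboo p b (n + 1) j + firstReturn p b n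
      = firstReturn p b n + ∑' j, if j = b then 0 else ∑' i, taboo p b n i * p i j := by
        rw [add_comm]; rfl
    _ = ∑' j, ∑' i, taboo p b n i * p i j :=
        (ENNReal.tsum_eq_add_tsum_ite (f := fun j => ∑' i, taboo p b n i * p i j) b).symm
    _ = ∑' i, taboo p b n i * ∑' j, p i j := by
        rw [ENNReal.tsum_comm]; simp_rw [ENNReal.tsum_mul_left]
    _ = ∑' j, taboo p b n j := by simp [hstoch]

lemma sum_firstReturn_add_tsum_taboo (hstoch : ∀ i, ∑' j, p i j = 1) (N : ℕ) :
    ∑ n ∈ Finset.range N, firstReturn p b n + ∑' j, taboo p b N j = 1 := by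
  induction N with
  | zero => simp [taboo]
  | succ N ih =>
    rw [Finset.sum_range_succ, add_assoc, add_comm (firstReturn p b N),
      tsum_taboo_succ_add_firstReturn p b hstoch, ih]

lemma tsum_firstReturn_eq_one (hstoch : ∀ i, ∑' j, p i j = 1) (hb : meanRet p b ≠ ⊤) :
    ∑' n, firstReturn p b n = 1 := by
  refine le_antisymm (ENNReal.tsum_le_of_sum_range_le fun N => ?_) ?_
  · exact le_self_add.trans_eq (sum_firstReturn_add_tsum_taboo p b hstoch N)
  · have hsurvive : Filter.Tendsto (fun N => ∑' j, taboo p b N j) Filter.atTop (nhds 0) :=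
      ENNReal.tendsto_atTop_zero_of_tsum_ne_top hb
    refine ge_of_tendsto' (by simpa using tendsto_const_nhds.add hsurvive) fun N => ?_
    rw [← sum_firstReturn_add_tsum_taboo p b hstoch N]
    gcongr
    exact ENNReal.sum_le_tsum _

lemma isStationaryMeasure_cycNum (hrec : ∑' n, firstReturn p b n = 1) :
    IsStationaryMeasure p (cycNum p b) := fun j => by
  have hswap : ∑' i, cycNum p b i * p i j = ∑' n, ∑' i, taboo p b n i * p i j := by
    simp_rw [cycNum, ← ENNReal.tsum_mul_right]
    exact ENNReal.tsum_comm
  rw [hswap]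
  by_cases hj : j = b
  · subst hj
    exact (cycNum_self p j).trans hrec.symm
  · exact cycNum_of_ne p b hj

variable {p b}

lemma IsStationaryMeasure.mul_sum_taboo_le {π : S → ℝ≥0∞} (hπ : IsStationaryMeasure p π)
    (N : ℕ) (a : S) : π b * ∑ n ∈ Finset.range N, taboo p b n a ≤ π a := by
  induction N generalizing a with
  | zero => simp
  | succ N ih =>
    by_cases ha : a = b
    · subst ha
      simp [Finset.sum_range_succ', taboo]
    · calc π b * ∑ n ∈ Finset.range (N + 1), taboo p b n a
          = ∑' i, (π b * ∑ n ∈ Finset.range N, taboo p b n i) * p i a := by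
            rw [Finset.sum_range_succ']
            simp_rw [taboo_succ_of_ne p b ha, Finset.mul_sum, Finset.sum_mul]
            rw [Summable.tsum_finsetSum fun _ _ => ENNReal.summable]
            simp [taboo, ha, Finset.mul_sum, ← ENNReal.tsum_mul_left, mul_assoc]
        _ ≤ ∑' i, π i * p i a := ENNReal.tsum_le_tsum fun i => mul_le_mul_left (ih i) _
        _ = π a := (hπ a).symm

lemma IsStationaryMeasure.mul_cycNum_le {π : S → ℝ≥0∞} (hπ : IsStationaryMeasure p π) (a : S) :
    π b * cycNum p b a ≤ π a := by
  rw [cycNum, ENNReal.tsum_eq_iSup_nat, ENNReal.mul_iSup]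
  exact iSup_le fun N => hπ.mul_sum_taboo_le N a

end Taboo

theorem markov_invariant_unique_general {S : Type*} (p : S → S → ℝ≥0∞)
    (hstoch : ∀ i, ∑' j, p i j = 1)
    (hirr : ∀ i j, Communicates p i j)
    (hposrec : ∀ b, meanRet p b < ⊤)
    (π : S → ℝ≥0∞) (hπ1 : ∑' a, π a = 1)
    (hπinv : ∀ j, π j = ∑' i, π i * p i j) :
    ∀ b a, π a = cyc p b a := by
  intro b a
  have hπ : IsStationaryMeasure p π := hπinv
  have hcyc : IsStationaryMeasure p (fun c => π b * cycNum p b c) :=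
    (isStationaryMeasure_cycNum p b
      (tsum_firstReturn_eq_one p b hstoch (hposrec b).ne)).const_mul (π b)
  have hπb : π b ≠ ⊤ := ENNReal.ne_top_of_tsum_ne_top (by simp [hπ1]) b
  have hπ_eq : ∀ c, π c = π b * cycNum p b c := fun c =>
    (hcyc.eq_of_le hstoch hπ hπ.mul_cycNum_le (by simpa [cycNum_self] using hπb)
      (by simp [cycNum_self]) (hirr c b).1).symm
  have hmass : π b * meanRet p b = 1 := by
    rw [meanRet_eq_tsum_cycNum, ← ENNReal.tsum_mul_left, ← hπ1]
    exact tsum_congr fun c => (hπ_eq c).symm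
  rw [hπ_eq a, cyc, ENNReal.div_eq_inv_mul, ← ENNReal.eq_inv_of_mul_eq_one_left hmass]

/-- Uniqueness of the invariant distribution of an irreducible positive recurrent
countable Markov chain: any invariant probability `π` equals the cycle measure `π^{(b)}`
for every state `b`. -/
theorem markov_invariant_unique {S : Type*} [Countable S] (p : S → S → ℝ≥0∞)
    (hstoch : ∀ i, ∑' j, p i j = 1)
    (hirr : ∀ i j, Communicates p i j)
    (hposrec : ∀ b, meanRet p b < ⊤)
    (π : S → ℝ≥0∞) (hπ1 : ∑' a, π a = 1)
    (hπinv : ∀ j, π j = ∑' i, π i * p i j) :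
    ∀ b a, π a = cyc p b a :=
  markov_invariant_unique_general p hstoch hirr hposrec π hπ1 hπinv
end
end
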